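/- arXiv:0707.1473 — 2 statements merged into one kernel-verified Lean document; each statement's English description precedes it below -/
import Mathlib

section
/- Let p > 1 be a real number and let (λ_n)_{n≥1} be a sequence of positive real numbers with Λ_n = λ_1 + ... + λ_n. Suppose there is a real constant L with 0 < L < p such that for every integer n ≥ 1, Λ_{n+1}/λ_{n+1} ≤ (Λ_n/λ_n) · (1 − L·λ_n/(p·Λ_n))^{1−p} + L/p. Then for every nonnegative real sequence (a_n) with Σ_{n=1}^∞ a_n^p < ∞ one has Σ_{n=1}^∞ ( (1/Λ_n) Σ_{k=1}^n λ_k a_k )^p ≤ (p/(p−L))^p Σ_{n=1}^∞ a_n^p. -/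
/-!
Write `w_n = Λ_n / λ_n`, `A_n` for the `n`-th weighted mean and `c = L / p`. Then
`w_n A_n = (w_n - 1) A_{n-1} + a_n`, and convexity of `t ↦ t ^ p`, with weights proportional to
`w_n - 1` and `1 - c` (they add up to `w_n - c`), gives
`(w_n - c) ^ (1 - p) (w_n A_n) ^ p ≤ (w_n - 1) A_{n-1} ^ p + (1 - c) ^ (1 - p) a_n ^ p`.
The hypothesis on `λ` is exactly `w_{n+1} - c ≤ w_n ^ p (w_n - c) ^ (1 - p)`, so the left side is
at least `(1 - c) A_n ^ p + (w_{n+1} - 1) A_n ^ p`. The nonnegative terms `(w_n - 1) A_{n-1} ^ p`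
telescope, leaving `(1 - c) ∑ A_n ^ p ≤ (1 - c) ^ (1 - p) ∑ a_n ^ p`, and `(1 - c)⁻¹ = p / (p - L)`.
-/

open Finset Real

theorem weighted_rpow_add_le {p α β y z : ℝ} (hp : 1 ≤ p) (hα : 0 ≤ α) (hβ : 0 < β)
    (hy : 0 ≤ y) (hz : 0 ≤ z) :
    (α + β) ^ (1 - p) * (α * y + z) ^ p ≤ α * y ^ p + β ^ (1 - p) * z ^ p := by
  set s := α + β
  have hs : 0 < s := by positivity
  have hconv := (convexOn_rpow hp).2 (Set.mem_Ici.2 hy) (Set.mem_Ici.2 (div_nonneg hz hβ.le))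
    (div_nonneg hα hs.le) (div_nonneg hβ.le hs.le) (by rw [← add_div]; exact div_self hs.ne')
  simp only [smul_eq_mul] at hconv
  have hmean : α / s * y + β / s * (z / β) = (α * y + z) / s := by field_simp
  rw [hmean, div_rpow (by positivity) hs.le, div_rpow hz hβ.le] at hconv
  have hs_rpow : s ^ (1 - p) = s / s ^ p := by rw [rpow_sub hs, rpow_one]
  have hβ_rpow : β ^ (1 - p) = β / β ^ p := by rw [rpow_sub hβ, rpow_one]
  have : 0 < s ^ p := rpow_pos_of_pos hs p
  have : 0 < β ^ p := rpow_pos_of_pos hβ p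
  rw [hs_rpow, hβ_rpow]
  calc s / s ^ p * (α * y + z) ^ p
      = s * ((α * y + z) ^ p / s ^ p) := by ring
    _ ≤ s * (α / s * y ^ p + β / s * (z ^ p / β ^ p)) := by gcongr
    _ = α * y ^ p + β / β ^ p * z ^ p := by field_simp

theorem sub_mul_rpow_le_of_le {p c w w' x y t : ℝ} (hp : 1 ≤ p) (hc : c < 1) (hw : 1 ≤ w)
    (hw' : w' ≤ w * (1 - c / w) ^ (1 - p) + c) (hx : 0 ≤ x) (hy : 0 ≤ y) (ht : 0 ≤ t)
    (hrec : w * x = (w - 1) * y + t) :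
    (w' - c) * x ^ p ≤ (w - 1) * y ^ p + (1 - c) ^ (1 - p) * t ^ p := by
  have hw0 : 0 < w := by linarith
  have hwc : 0 < w - c := by linarith
  have hweight : w * (1 - c / w) ^ (1 - p) * x ^ p = (w - c) ^ (1 - p) * (w * x) ^ p := by
    have : 0 < w ^ p := rpow_pos_of_pos hw0 p
    rw [one_sub_div hw0.ne', div_rpow hwc.le hw0.le, mul_rpow hw0.le hx, rpow_sub hw0, rpow_one]
    field_simp
  calc (w' - c) * x ^ p
      ≤ w * (1 - c / w) ^ (1 - p) * x ^ p := by gcongr; linarith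
    _ = ((w - 1) + (1 - c)) ^ (1 - p) * ((w - 1) * y + t) ^ p := by rw [hweight, hrec, sub_add_sub_cancel]
    _ ≤ (w - 1) * y ^ p + (1 - c) ^ (1 - p) * t ^ p :=
      weighted_rpow_add_le hp (by linarith) (by linarith) hy ht

theorem summable_and_tsum_le_of_telescoping {x y f : ℕ → ℝ} (hx : ∀ n, 0 ≤ x n)
    (hy : ∀ n, 0 ≤ y n) (hy_sum : Summable y) (hf : ∀ n, 0 ≤ f n) (hf0 : f 0 = 0)
    (h : ∀ n, x n + f (n + 1) ≤ f n + y n) :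
    Summable x ∧ ∑' n, x n ≤ ∑' n, y n := by
  have hpartial : ∀ N, ∑ n ∈ range N, x n + f N ≤ ∑ n ∈ range N, y n := by
    intro N
    induction N with
    | zero => simp [hf0]
    | succ N ih =>
      rw [sum_range_succ, sum_range_succ]
      linarith [h N]
  have hbound : ∀ N, ∑ n ∈ range N, x n ≤ ∑' n, y n := fun N =>
    calc ∑ n ∈ range N, x n ≤ ∑ n ∈ range N, y n := by linarith [hpartial N, hf N]
      _ ≤ ∑' n, y n := hy_sum.sum_le_tsum _ fun n _ => hy n
  exact ⟨summable_of_sum_range_le hx hbound, tsum_le_of_sum_range_le hx hbound⟩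

noncomputable def partialSum (lam : ℕ → ℝ) (n : ℕ) : ℝ := ∑ i ∈ Icc 1 n, lam i

/-- At `n = 0` this is the junk value `1 / 0 * 0 = 0`. -/
noncomputable def weightedMean (lam a : ℕ → ℝ) (n : ℕ) : ℝ :=
  1 / partialSum lam n * ∑ k ∈ Icc 1 n, lam k * a k

section WeightedMean

variable {lam : ℕ → ℝ}

theorem partialSum_succ (n : ℕ) : partialSum lam (n + 1) = partialSum lam n + lam (n + 1) :=
  sum_Icc_succ_top (by omega) lam

theorem partialSum_nonneg (hlam : ∀ n, 1 ≤ n → 0 ≤ lam n) (n : ℕ) : 0 ≤ partialSum lam n :=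
  sum_nonneg fun i hi => hlam i (mem_Icc.1 hi).1

theorem partialSum_succ_pos (hlam : ∀ n, 1 ≤ n → 0 < lam n) (n : ℕ) :
    0 < partialSum lam (n + 1) := by
  rw [partialSum_succ]
  linarith [partialSum_nonneg (fun i hi => (hlam i hi).le) n, hlam (n + 1) (by omega)]

theorem one_le_partialSum_div (hlam : ∀ n, 1 ≤ n → 0 < lam n) (n : ℕ) :
    1 ≤ partialSum lam (n + 1) / lam (n + 1) := by
  rw [le_div_iff₀ (hlam (n + 1) (by omega)), partialSum_succ]
  linarith [partialSum_nonneg (fun i hi => (hlam i hi).le) n]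

theorem weightedMean_nonneg {a : ℕ → ℝ} (hlam : ∀ n, 1 ≤ n → 0 ≤ lam n)
    (ha : ∀ n, 1 ≤ n → 0 ≤ a n) (n : ℕ) : 0 ≤ weightedMean lam a n :=
  mul_nonneg (one_div_nonneg.2 (partialSum_nonneg hlam n)) <| sum_nonneg fun k hk =>
    mul_nonneg (hlam k (mem_Icc.1 hk).1) (ha k (mem_Icc.1 hk).1)

theorem partialSum_mul_weightedMean (hlam : ∀ n, 1 ≤ n → 0 < lam n) (a : ℕ → ℝ) (n : ℕ) :
    partialSum lam n * weightedMean lam a n = ∑ k ∈ Icc 1 n, lam k * a k := by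
  cases n with
  | zero => simp [weightedMean]
  | succ n =>
    rw [weightedMean, ← mul_assoc, mul_one_div_cancel (partialSum_succ_pos hlam n).ne', one_mul]

theorem partialSum_div_mul_weightedMean_succ (hlam : ∀ n, 1 ≤ n → 0 < lam n) (a : ℕ → ℝ)
    (n : ℕ) :
    partialSum lam (n + 1) / lam (n + 1) * weightedMean lam a (n + 1) =
      (partialSum lam (n + 1) / lam (n + 1) - 1) * weightedMean lam a n + a (n + 1) := by
  have hl : lam (n + 1) ≠ 0 := (hlam (n + 1) (by omega)).ne'
  have hsucc := partialSum_mul_weightedMean hlam a (n + 1)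
  rw [sum_Icc_succ_top (by omega), ← partialSum_mul_weightedMean hlam a n] at hsucc
  rw [partialSum_succ] at hsucc ⊢
  field_simp
  linear_combination hsucc

end WeightedMean

theorem stmt_1_general (p L : ℝ) (hp : 1 < p) (hLp : L < p)
    (lam Lam : ℕ → ℝ)
    (hlam : ∀ n, 1 ≤ n → 0 < lam n)
    (hLam : ∀ n, Lam n = ∑ i ∈ Finset.Icc 1 n, lam i)
    (hcond : ∀ n, 1 ≤ n →
      Lam (n + 1) / lam (n + 1) ≤
        (Lam n / lam n) * (1 - L * lam n / (p * Lam n)) ^ (1 - p) + L / p)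
    (a : ℕ → ℝ) (ha : ∀ n, 1 ≤ n → 0 ≤ a n)
    (hsum : Summable fun n : ℕ => a (n + 1) ^ p) :
    (Summable fun n : ℕ =>
      ((1 / Lam (n + 1)) * ∑ k ∈ Finset.Icc 1 (n + 1), lam k * a k) ^ p) ∧
    ∑' n : ℕ, ((1 / Lam (n + 1)) * ∑ k ∈ Finset.Icc 1 (n + 1), lam k * a k) ^ p ≤
      (p / (p - L)) ^ p * ∑' n : ℕ, a (n + 1) ^ p := by
  obtain rfl : Lam = partialSum lam := funext hLam
  change (Summable fun n => weightedMean lam a (n + 1) ^ p) ∧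
    ∑' n, weightedMean lam a (n + 1) ^ p ≤ _
  set c := L / p with hc_def
  have hc : c < 1 := (div_lt_one (by linarith)).2 hLp
  have hA := weightedMean_nonneg (fun n hn => (hlam n hn).le) ha
  have hstep (n : ℕ) := sub_mul_rpow_le_of_le (w' := partialSum lam (n + 2) / lam (n + 2))
    hp.le hc (one_le_partialSum_div hlam n)
    (by rw [div_div_div_eq]; exact hcond (n + 1) (by omega)) (hA (n + 1)) (hA n)
    (ha (n + 1) (by omega)) (partialSum_div_mul_weightedMean_succ hlam a n)
  obtain ⟨hsummable, htsum⟩ := summable_and_tsum_le_of_telescoping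
    (x := fun n => (1 - c) * weightedMean lam a (n + 1) ^ p)
    (y := fun n => (1 - c) ^ (1 - p) * a (n + 1) ^ p)
    (f := fun n => (partialSum lam (n + 1) / lam (n + 1) - 1) * weightedMean lam a n ^ p)
    (fun n => mul_nonneg (by linarith) (rpow_nonneg (hA (n + 1)) p))
    (fun n => mul_nonneg (by positivity) (rpow_nonneg (ha (n + 1) (by omega)) p))
    (hsum.mul_left _)
    (fun n => mul_nonneg (by linarith [one_le_partialSum_div hlam n]) (rpow_nonneg (hA n) p))
    (by simp [weightedMean, partialSum, zero_rpow (by linarith : p ≠ 0)])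
    (fun n => by linarith [hstep n])
  have hconst : (1 - c) ^ (1 - p) = (1 - c) * (p / (p - L)) ^ p := by
    have h1c : 1 - c = (p / (p - L))⁻¹ := by rw [inv_div, hc_def]; field_simp
    rw [rpow_sub (by linarith), rpow_one, h1c, inv_rpow (div_pos (by linarith) (by linarith)).le,
      div_eq_mul_inv, inv_inv]
  refine ⟨(summable_mul_left_iff (by linarith)).1 hsummable, ?_⟩
  rw [tsum_mul_left, tsum_mul_left, hconst, mul_assoc] at htsum
  exact le_of_mul_le_mul_left htsum (by linarith)

/-- Theorem 1.2, the main result of the paper. -/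
theorem stmt_1 (p L : ℝ) (hp : 1 < p) (hL : 0 < L) (hLp : L < p)
    (lam Lam : ℕ → ℝ)
    (hlam : ∀ n, 1 ≤ n → 0 < lam n)
    (hLam : ∀ n, Lam n = ∑ i ∈ Finset.Icc 1 n, lam i)
    (hcond : ∀ n, 1 ≤ n →
      Lam (n + 1) / lam (n + 1) ≤
        (Lam n / lam n) * (1 - L * lam n / (p * Lam n)) ^ (1 - p) + L / p)
    (a : ℕ → ℝ) (ha : ∀ n, 1 ≤ n → 0 ≤ a n)
    (hsum : Summable fun n : ℕ => a (n + 1) ^ p) :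
    (Summable fun n : ℕ =>
      ((1 / Lam (n + 1)) * ∑ k ∈ Finset.Icc 1 (n + 1), lam k * a k) ^ p) ∧
    ∑' n : ℕ, ((1 / Lam (n + 1)) * ∑ k ∈ Finset.Icc 1 (n + 1), lam k * a k) ^ p ≤
      (p / (p - L)) ^ p * ∑' n : ℕ, a (n + 1) ^ p :=
  stmt_1_general p L hp hLp lam Lam hlam hLam hcond a ha hsum
end

section
/- Let (λ_n)_{n≥1} be a sequence of positive real numbers with Λ_n = λ_1 + ... + λ_n, and let E be a real number such that for every integer n ≥ 1, (Λ_{n+1}/λ_{n+1}) · Π_{k=1}^n (λ_k/Λ_k)^{λ_k/Λ_n} ≤ E. Then for every nonnegative real sequence (a_n) with Σ_{n=1}^∞ a_n < ∞ one has Σ_{n=1}^∞ ( Π_{k=1}^n a_k^{λ_k/Λ_n} ) ≤ E · Σ_{n=1}^∞ a_n. -/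
/-!
Weighted AM-GM with weights `λ_k / Λ_n`, applied to the numbers `Λ_k a_k / λ_k`, gives
`G_n ≤ (P_n / Λ_n) ∑_{k ≤ n} Λ_k a_k` for `G_n = ∏_{k ≤ n} a_k ^ (λ_k / Λ_n)` and
`P_n = ∏_{k ≤ n} (λ_k / Λ_k) ^ (λ_k / Λ_n)`. Since `Λ_{n+1} = Λ_n + λ_{n+1}`, the hypothesis on `E`
is equivalent to the telescoping bound `P_n / Λ_n ≤ E (1 / Λ_n - 1 / Λ_{n+1})`, and summing by
parts against it gives `∑_{n ≤ N} G_n ≤ E ∑_{k ≤ N} a_k`.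
-/

open Finset

theorem sum_range_add_one_eq_sum_Icc {M : Type*} [AddCommMonoid M] (f : ℕ → M) (N : ℕ) :
    ∑ i ∈ range N, f (i + 1) = ∑ i ∈ Icc 1 N, f i := by
  rw [range_eq_Ico, sum_Ico_add', zero_add, Ico_add_one_right_eq_Icc]

theorem div_le_mul_one_div_sub_one_div {P E L l : ℝ} (hL : 0 < L) (hl : 0 < l)
    (h : (L + l) / l * P ≤ E) : P / L ≤ E * (1 / L - 1 / (L + l)) := by
  have hLl : 0 < L + l := by linarith
  have hdiff : 1 / L - 1 / (L + l) = l / (L * (L + l)) := by field_simp; ring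
  rw [hdiff]
  calc P / L = (L + l) / l * P * (l / (L * (L + l))) := by field_simp
    _ ≤ E * (l / (L * (L + l))) := by gcongr

theorem geom_mean_le_mul_arith_mean_weighted_div {ι : Type*} (s : Finset ι) (w c a : ι → ℝ)
    (hw : ∀ i ∈ s, 0 ≤ w i) (hw1 : ∑ i ∈ s, w i = 1) (hc : ∀ i ∈ s, 0 < c i)
    (ha : ∀ i ∈ s, 0 ≤ a i) :
    ∏ i ∈ s, a i ^ w i ≤ (∏ i ∈ s, c i ^ w i) * ∑ i ∈ s, w i * (a i / c i) := by
  have hsplit : ∏ i ∈ s, a i ^ w i = (∏ i ∈ s, c i ^ w i) * ∏ i ∈ s, (a i / c i) ^ w i := by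
    rw [← prod_mul_distrib]
    refine prod_congr rfl fun i hi => ?_
    rw [← Real.mul_rpow (hc i hi).le (div_nonneg (ha i hi) (hc i hi).le),
      mul_div_cancel₀ _ (hc i hi).ne']
  rw [hsplit]
  gcongr
  · exact prod_nonneg fun i hi => Real.rpow_nonneg (hc i hi).le _
  · exact Real.geom_mean_le_arith_mean_weighted s w _ hw hw1
      fun i hi => div_nonneg (ha i hi) (hc i hi).le

section SummationByParts

variable {G c v a : ℕ → ℝ} {E : ℝ}

theorem sum_Icc_add_div_mul_sum_Icc_le (hv : ∀ n, 1 ≤ n → 0 < v n) (ha : ∀ n, 1 ≤ n → 0 ≤ a n)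
    (hG : ∀ n, 1 ≤ n → G n ≤ c n * ∑ k ∈ Icc 1 n, v k * a k)
    (hc : ∀ n, 1 ≤ n → c n ≤ E * (1 / v n - 1 / v (n + 1))) (N : ℕ) :
    ∑ n ∈ Icc 1 N, G n + E / v (N + 1) * ∑ k ∈ Icc 1 N, v k * a k ≤
      E * ∑ k ∈ Icc 1 N, a k := by
  induction N with
  | zero => simp
  | succ N ih =>
    set S := ∑ k ∈ Icc 1 (N + 1), v k * a k
    have hS : 0 ≤ S := sum_nonneg fun k hk =>
      mul_nonneg (hv k (mem_Icc.mp hk).1).le (ha k (mem_Icc.mp hk).1)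
    have hstep : G (N + 1) ≤ E * (1 / v (N + 1) - 1 / v (N + 2)) * S :=
      (hG _ N.succ_pos).trans (mul_le_mul_of_nonneg_right (hc _ N.succ_pos) hS)
    have hSsucc : S = ∑ k ∈ Icc 1 N, v k * a k + v (N + 1) * a (N + 1) :=
      sum_Icc_succ_top (by omega) _
    have hv' : v (N + 1) ≠ 0 := (hv _ N.succ_pos).ne'
    rw [sum_Icc_succ_top (by omega), sum_Icc_succ_top (by omega)]
    calc ∑ n ∈ Icc 1 N, G n + G (N + 1) + E / v (N + 1 + 1) * S
        ≤ ∑ n ∈ Icc 1 N, G n + E * (1 / v (N + 1) - 1 / v (N + 2)) * S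
          + E / v (N + 1 + 1) * S := by gcongr
      _ = ∑ n ∈ Icc 1 N, G n + E / v (N + 1) * ∑ k ∈ Icc 1 N, v k * a k + E * a (N + 1) := by
          rw [hSsucc]; field_simp; ring
      _ ≤ E * (∑ k ∈ Icc 1 N, a k + a (N + 1)) := by linarith

theorem sum_Icc_le_mul_sum_Icc (hE : 0 ≤ E) (hv : ∀ n, 1 ≤ n → 0 < v n)
    (ha : ∀ n, 1 ≤ n → 0 ≤ a n) (hG : ∀ n, 1 ≤ n → G n ≤ c n * ∑ k ∈ Icc 1 n, v k * a k)
    (hc : ∀ n, 1 ≤ n → c n ≤ E * (1 / v n - 1 / v (n + 1))) (N : ℕ) :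
    ∑ n ∈ Icc 1 N, G n ≤ E * ∑ k ∈ Icc 1 N, a k := by
  have htail : 0 ≤ E / v (N + 1) * ∑ k ∈ Icc 1 N, v k * a k :=
    mul_nonneg (div_nonneg hE (hv _ N.succ_pos).le) <| sum_nonneg fun k hk =>
      mul_nonneg (hv k (mem_Icc.mp hk).1).le (ha k (mem_Icc.mp hk).1)
  linarith [sum_Icc_add_div_mul_sum_Icc_le hv ha hG hc N]

end SummationByParts

theorem summable_and_tsum_le_of_sum_Icc_le {G a : ℕ → ℝ} {E : ℝ} (hE : 0 ≤ E)
    (hG : ∀ n, 1 ≤ n → 0 ≤ G n) (ha : ∀ n, 1 ≤ n → 0 ≤ a n)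
    (hsum : Summable fun n => a (n + 1))
    (h : ∀ N, ∑ n ∈ Icc 1 N, G n ≤ E * ∑ k ∈ Icc 1 N, a k) :
    Summable (fun n => G (n + 1)) ∧ ∑' n, G (n + 1) ≤ E * ∑' n, a (n + 1) := by
  have hG' : ∀ n, 0 ≤ G (n + 1) := fun n => hG _ n.succ_pos
  have hbound : ∀ N, ∑ n ∈ range N, G (n + 1) ≤ E * ∑' n, a (n + 1) := fun N => by
    rw [sum_range_add_one_eq_sum_Icc G]
    refine (h N).trans (mul_le_mul_of_nonneg_left ?_ hE)
    rw [← sum_range_add_one_eq_sum_Icc a]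
    exact hsum.sum_le_tsum _ fun n _ => ha _ n.succ_pos
  exact ⟨summable_of_sum_range_le hG' hbound, Real.tsum_le_of_sum_range_le hG' hbound⟩

section Bennett

variable {lam Lam : ℕ → ℝ}

theorem pos_of_eq_sum_Icc (hlam : ∀ n, 1 ≤ n → 0 < lam n)
    (hLam : ∀ n, Lam n = ∑ i ∈ Icc 1 n, lam i) {n : ℕ} (hn : 1 ≤ n) : 0 < Lam n := by
  rw [hLam]
  exact sum_pos (fun i hi => hlam i (mem_Icc.mp hi).1) ⟨1, mem_Icc.mpr ⟨le_rfl, hn⟩⟩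

theorem prod_rpow_le_div_mul_sum_mul (hlam : ∀ n, 1 ≤ n → 0 < lam n)
    (hLam : ∀ n, Lam n = ∑ i ∈ Icc 1 n, lam i) {a : ℕ → ℝ} (ha : ∀ n, 1 ≤ n → 0 ≤ a n)
    {n : ℕ} (hn : 1 ≤ n) :
    ∏ k ∈ Icc 1 n, a k ^ (lam k / Lam n) ≤
      (∏ k ∈ Icc 1 n, (lam k / Lam k) ^ (lam k / Lam n)) / Lam n *
        ∑ k ∈ Icc 1 n, Lam k * a k := by
  have hLn := pos_of_eq_sum_Icc hlam hLam hn
  have hw1 : ∑ k ∈ Icc 1 n, lam k / Lam n = 1 := by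
    rw [← sum_div, ← hLam, div_self hLn.ne']
  have hamgm := geom_mean_le_mul_arith_mean_weighted_div (Icc 1 n) (fun k => lam k / Lam n)
    (fun k => lam k / Lam k) a
    (fun k hk => (div_pos (hlam k (mem_Icc.mp hk).1) hLn).le) hw1
    (fun k hk => div_pos (hlam k (mem_Icc.mp hk).1)
      (pos_of_eq_sum_Icc hlam hLam (mem_Icc.mp hk).1))
    (fun k hk => ha k (mem_Icc.mp hk).1)
  refine hamgm.trans_eq ?_
  rw [div_mul_eq_mul_div, mul_div_assoc, sum_div]
  refine congrArg _ (sum_congr rfl fun k hk => ?_)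
  have := (hlam k (mem_Icc.mp hk).1).ne'
  field_simp

theorem prod_div_le_mul_one_div_sub_one_div (hlam : ∀ n, 1 ≤ n → 0 < lam n)
    (hLam : ∀ n, Lam n = ∑ i ∈ Icc 1 n, lam i) {E : ℝ} {n : ℕ} (hn : 1 ≤ n)
    (hE : Lam (n + 1) / lam (n + 1) * ∏ k ∈ Icc 1 n, (lam k / Lam k) ^ (lam k / Lam n) ≤ E) :
    (∏ k ∈ Icc 1 n, (lam k / Lam k) ^ (lam k / Lam n)) / Lam n ≤
      E * (1 / Lam n - 1 / Lam (n + 1)) := by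
  have hLam_succ : Lam (n + 1) = Lam n + lam (n + 1) := by
    rw [hLam, hLam, sum_Icc_succ_top (by omega)]
  rw [hLam_succ] at hE ⊢
  exact div_le_mul_one_div_sub_one_div (pos_of_eq_sum_Icc hlam hLam hn) (hlam _ n.succ_pos) hE

end Bennett

/-- Bennett's theorem (Theorem 1.5): weighted Carleman inequality. -/
theorem stmt_4 (E : ℝ)
    (lam Lam : ℕ → ℝ)
    (hlam : ∀ n, 1 ≤ n → 0 < lam n)
    (hLam : ∀ n, Lam n = ∑ i ∈ Finset.Icc 1 n, lam i)
    (hcond : ∀ n, 1 ≤ n →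
      (Lam (n + 1) / lam (n + 1)) *
        ∏ k ∈ Finset.Icc 1 n, (lam k / Lam k) ^ (lam k / Lam n) ≤ E)
    (a : ℕ → ℝ) (ha : ∀ n, 1 ≤ n → 0 ≤ a n)
    (hsum : Summable fun n : ℕ => a (n + 1)) :
    (Summable fun n : ℕ =>
      ∏ k ∈ Finset.Icc 1 (n + 1), a k ^ (lam k / Lam (n + 1))) ∧
    ∑' n : ℕ, ∏ k ∈ Finset.Icc 1 (n + 1), a k ^ (lam k / Lam (n + 1)) ≤
      E * ∑' n : ℕ, a (n + 1) := by
  have hLam_pos : ∀ n, 1 ≤ n → 0 < Lam n := fun n => pos_of_eq_sum_Icc hlam hLam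
  have hE : 0 ≤ E := (hcond 1 le_rfl).trans' <| mul_nonneg
    (div_pos (hLam_pos 2 (by norm_num)) (hlam 2 (by norm_num))).le
    (prod_nonneg fun k hk => Real.rpow_nonneg
      (div_pos (hlam k (mem_Icc.mp hk).1) (hLam_pos k (mem_Icc.mp hk).1)).le _)
  refine summable_and_tsum_le_of_sum_Icc_le
    (G := fun n => ∏ k ∈ Icc 1 n, a k ^ (lam k / Lam n)) hE
    (fun n _ => prod_nonneg fun k hk => Real.rpow_nonneg (ha k (mem_Icc.mp hk).1) _) ha hsum ?_
  exact sum_Icc_le_mul_sum_Icc hE hLam_pos ha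
    (fun n hn => prod_rpow_le_div_mul_sum_mul hlam hLam ha hn)
    (fun n hn => prod_div_le_mul_one_div_sub_one_div hlam hLam hn (hcond n hn))
end
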